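/- arXiv:math/0302335 — 3 statements merged into one kernel-verified Lean document; each statement's English description precedes it below -/
import Mathlib

section
/- Let T = {f : C([0,1], ℂ) | f(0) = conj(f(1))} be the real C*-algebra of self-conjugate paths. Then the complexification ℂ ⊗_ℝ T is *-isomorphic to C(S¹, ℂ), the complex C*-algebra of continuous functions on the circle. -/
open scoped TensorProduct
open Complex

set_option synthInstance.maxHeartbeats 1000000
set_option maxHeartbeats 1000000

noncomputable section

/-- The real C*-algebra `T` of self-conjugate paths: continuous functions
`f : [0,1] → ℂ` with `f 0 = conj (f 1)`, as a star-subalgebra (over `ℝ`) of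
`C([0,1], ℂ)`. -/
def selfConjT : StarSubalgebra ℝ C(unitInterval, ℂ) where
  carrier := {f | f 0 = (starRingEnd ℂ) (f 1)}
  mul_mem' := by
    intro a b ha hb
    simp only [Set.mem_setOf_eq, ContinuousMap.mul_apply] at *
    rw [ha, hb, map_mul]
  one_mem' := by simp [Set.mem_setOf_eq]
  add_mem' := by
    intro a b ha hb
    simp only [Set.mem_setOf_eq, ContinuousMap.add_apply] at *
    rw [ha, hb, map_add]
  zero_mem' := by simp [Set.mem_setOf_eq]
  algebraMap_mem' := by
    intro r
    simp [Set.mem_setOf_eq, Complex.conj_ofReal]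
  star_mem' := by
    intro f hf
    simp only [Set.mem_setOf_eq, ContinuousMap.star_apply] at *
    rw [hf]
    simp



def projI (x : ℝ) : unitInterval :=
  ⟨Real.arccos x / Real.pi, ⟨div_nonneg (Real.arccos_nonneg x) Real.pi_pos.le,
    by rw [div_le_one Real.pi_pos]; exact Real.arccos_le_pi x⟩⟩

lemma continuous_projI : Continuous projI :=
  Continuous.subtype_mk (Real.continuous_arccos.div_const _) _

@[simp] lemma projI_one : projI 1 = 0 := by
  exact Subtype.ext (by simp [projI, Real.arccos_one])

@[simp] lemma projI_neg_one : projI (-1) = 1 := by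
  simp only [projI, Real.arccos_neg_one]
  exact Subtype.ext (by simp [div_self Real.pi_pos.ne'])

lemma projI_cos (t : unitInterval) : projI (Real.cos (Real.pi * t)) = t := by
  apply Subtype.ext
  simp only [projI]
  rw [Real.arccos_cos (mul_nonneg Real.pi_pos.le t.2.1) (by nlinarith [t.2.2, Real.pi_pos]),
    mul_div_cancel_left₀ _ Real.pi_pos.ne']

lemma circle_sq (z : Circle) : (z:ℂ).re^2 + (z:ℂ).im^2 = 1 := by
  have := Circle.normSq_coe z
  rw [Complex.normSq_apply] at this
  nlinarith [this]

def nC (z : Circle) : Circle := Circle.exp Real.pi * z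

@[simp] lemma coe_nC (z : Circle) : ((nC z) : ℂ) = -(z:ℂ) := by
  have : ((Circle.exp Real.pi : Circle) : ℂ) = -1 := by
    rw [Circle.coe_exp]; simpa using Complex.exp_pi_mul_I
  show ((Circle.exp Real.pi : Circle) : ℂ) * z = _
  rw [this]; ring

lemma nC_nC (z : Circle) : nC (nC z) = z := by
  ext1; simp

lemma continuous_nC : Continuous nC := continuous_const.mul continuous_id

def cExp (t : unitInterval) : Circle := Circle.exp (Real.pi * t)

lemma continuous_cExp : Continuous cExp :=
  Circle.exp.continuous.comp (continuous_const.mul continuous_subtype_val)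

@[simp] lemma re_cExp (t : unitInterval) : ((cExp t : Circle) : ℂ).re = Real.cos (Real.pi * t) := by
  rw [cExp, Circle.coe_exp, Complex.exp_ofReal_mul_I_re]

@[simp] lemma im_cExp (t : unitInterval) : ((cExp t : Circle) : ℂ).im = Real.sin (Real.pi * t) := by
  rw [cExp, Circle.coe_exp, Complex.exp_ofReal_mul_I_im]

@[simp] lemma cExp_zero : cExp 0 = 1 := by
  simp [cExp, Circle.exp_zero]

@[simp] lemma cExp_one : cExp 1 = Circle.exp Real.pi := by
  simp [cExp]

lemma nC_cExp_zero : nC (cExp 0) = cExp 1 := by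
  simp [nC]

lemma nC_cExp_one : nC (cExp 1) = cExp 0 := by
  simp only [nC, cExp_one, cExp_zero, ← Circle.exp_add, Real.pi]
  rw [← two_mul]
  exact Circle.exp_two_pi

lemma cExp_projI (z : Circle) (h : 0 ≤ (z:ℂ).im) : cExp (projI (z:ℂ).re) = z := by
  have hsq := circle_sq z
  have h1 : -1 ≤ (z:ℂ).re := by nlinarith [sq_nonneg ((z:ℂ).im)]
  have h2 : (z:ℂ).re ≤ 1 := by nlinarith [sq_nonneg ((z:ℂ).im)]
  apply Subtype.ext
  rw [cExp, Circle.coe_exp]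
  have : Real.pi * (projI ((z:ℂ).re) : ℝ) = Real.arccos ((z:ℂ).re) := by
    show Real.pi * (Real.arccos ((z:ℂ).re) / Real.pi) = _
    rw [mul_comm, div_mul_cancel₀ _ Real.pi_pos.ne']
  rw [this]
  apply Complex.ext
  · rw [Complex.exp_ofReal_mul_I_re, Real.cos_arccos h1 h2]
  · rw [Complex.exp_ofReal_mul_I_im, Real.sin_arccos]
    rw [show 1 - (z:ℂ).re^2 = (z:ℂ).im^2 by linarith, Real.sqrt_sq h]


def glueFun (f : C(unitInterval, ℂ)) (z : Circle) : ℂ :=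
  if 0 ≤ (z:ℂ).im then f (projI (z:ℂ).re) else (starRingEnd ℂ) (f (projI (-(z:ℂ).re)))

lemma continuous_circle_coe : Continuous (fun z : Circle => (z:ℂ)) :=
  continuous_induced_dom

lemma glue_cont (f : C(unitInterval, ℂ)) (hf : f 0 = (starRingEnd ℂ) (f 1)) :
    Continuous (glueFun f) := by
  apply Continuous.if
  · intro z hz
    have hsub := (Complex.continuous_im.comp continuous_circle_coe).frontier_preimage_subset
      (Set.Ici (0:ℝ))
    have him : (z:ℂ).im = 0 := by
      have h2 := hsub hz
      rw [frontier_Ici] at h2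
      exact h2
    have hsq := circle_sq z
    have : (z:ℂ).re * (z:ℂ).re = 1 := by nlinarith
    rcases mul_self_eq_one_iff.mp this with h | h <;> rw [h] <;>
      simp only [projI_one, projI_neg_one, neg_neg]
    · rw [hf]
    · rw [hf]; simp
  · exact f.continuous.comp (continuous_projI.comp
      (Complex.continuous_re.comp continuous_circle_coe))
  · exact Complex.continuous_conj.comp (f.continuous.comp (continuous_projI.comp
      (Complex.continuous_re.comp continuous_circle_coe).neg))

def glue (f : selfConjT) : C(Circle, ℂ) := ⟨glueFun (f : C(unitInterval,ℂ)), glue_cont _ f.2⟩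

lemma glue_apply_of_nonneg (f : selfConjT) (z : Circle) (h : 0 ≤ (z:ℂ).im) :
    glue f z = (f : C(unitInterval,ℂ)) (projI (z:ℂ).re) := if_pos h

lemma glue_apply_of_neg (f : selfConjT) (z : Circle) (h : (z:ℂ).im < 0) :
    glue f z = (starRingEnd ℂ) ((f : C(unitInterval,ℂ)) (projI (-(z:ℂ).re))) :=
  if_neg (not_le.2 h)

lemma glue_nC (f : selfConjT) (z : Circle) :
    glue f (nC z) = (starRingEnd ℂ) (glue f z) := by
  have hf : (f : C(unitInterval,ℂ)) 0 = (starRingEnd ℂ) ((f : C(unitInterval,ℂ)) 1) := f.2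
  rcases lt_trichotomy ((z:ℂ).im) 0 with h | h | h
  · rw [glue_apply_of_nonneg f (nC z) (by simp; linarith), glue_apply_of_neg f z h]
    simp
  · have hsq := circle_sq z
    have : (z:ℂ).re * (z:ℂ).re = 1 := by nlinarith
    have hnz : ((nC z : Circle):ℂ).im = 0 := by simp [h]
    rcases mul_self_eq_one_iff.mp this with hre | hre
    · rw [glue_apply_of_nonneg f (nC z) (by simp [h]), glue_apply_of_nonneg f z (by simp [h])]
      simp [hre, hf]
    · rw [glue_apply_of_nonneg f (nC z) (by simp [h]), glue_apply_of_nonneg f z (by simp [h])]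
      simp [hre, hf]
  · rw [glue_apply_of_neg f (nC z) (by simp; linarith), glue_apply_of_nonneg f z h.le]
    simp

lemma glue_cExp (f : selfConjT) (t : unitInterval) :
    glue f (cExp t) = (f : C(unitInterval,ℂ)) t := by
  rw [glue_apply_of_nonneg f (cExp t) (by
    rw [im_cExp]
    exact Real.sin_nonneg_of_nonneg_of_le_pi (mul_nonneg Real.pi_pos.le t.2.1)
      (by nlinarith [t.2.2, Real.pi_pos]))]
  rw [re_cExp, projI_cos]

lemma glue_star (f : selfConjT) (z : Circle) :
    glue (star f) z = (starRingEnd ℂ) (glue f z) := by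
  by_cases h : 0 ≤ (z:ℂ).im
  · rw [glue_apply_of_nonneg _ _ h, glue_apply_of_nonneg _ _ h]
    simp
  · rw [glue_apply_of_neg _ _ (not_le.1 h), glue_apply_of_neg _ _ (not_le.1 h)]
    simp

def G : selfConjT →ₐ[ℝ] C(Circle, ℂ) where
  toFun := glue
  map_one' := by
    ext z
    show glueFun ((1 : selfConjT) : C(unitInterval,ℂ)) z = 1
    have h1 : ((1 : selfConjT) : C(unitInterval,ℂ)) = 1 := rfl
    rw [h1]
    unfold glueFun
    split <;> simp
  map_mul' f g := by
    ext z
    show glueFun ((f * g : selfConjT) : C(unitInterval,ℂ)) z = (glue f * glue g) z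
    have h1 : ((f * g : selfConjT) : C(unitInterval,ℂ))
        = (f : C(unitInterval,ℂ)) * (g : C(unitInterval,ℂ)) := rfl
    rw [h1, ContinuousMap.mul_apply]
    show _ = glueFun _ z * glueFun _ z
    unfold glueFun
    split <;> simp
  map_zero' := by
    ext z
    show glueFun ((0 : selfConjT) : C(unitInterval,ℂ)) z = 0
    have h1 : ((0 : selfConjT) : C(unitInterval,ℂ)) = 0 := rfl
    rw [h1]
    unfold glueFun
    split <;> simp
  map_add' f g := by
    ext z
    show glueFun ((f + g : selfConjT) : C(unitInterval,ℂ)) z = (glue f + glue g) z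
    have h1 : ((f + g : selfConjT) : C(unitInterval,ℂ))
        = (f : C(unitInterval,ℂ)) + (g : C(unitInterval,ℂ)) := rfl
    rw [h1, ContinuousMap.add_apply]
    show _ = glueFun _ z + glueFun _ z
    unfold glueFun
    split <;> simp
  commutes' r := by
    ext z
    show glueFun ((algebraMap ℝ selfConjT r : selfConjT) : C(unitInterval,ℂ)) z = _
    have h1 : ((algebraMap ℝ selfConjT r : selfConjT) : C(unitInterval,ℂ))
        = algebraMap ℝ C(unitInterval,ℂ) r := rfl
    rw [h1]
    unfold glueFun
    split <;> simp [Complex.conj_ofReal]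

def E : (ℂ ⊗[ℝ] selfConjT) →ₐ[ℂ] C(Circle, ℂ) :=
  Algebra.TensorProduct.lift (Algebra.ofId ℂ _) G fun _ _ => Commute.all _ _

lemma E_tmul (z : ℂ) (f : selfConjT) :
    E (z ⊗ₜ[ℝ] f) = algebraMap ℂ C(Circle, ℂ) z * glue f :=
  Algebra.TensorProduct.lift_tmul _ _ _ _ _

lemma E_tmul_apply (z : ℂ) (f : selfConjT) (w : Circle) :
    E (z ⊗ₜ[ℝ] f) w = z * glue f w := by
  rw [E_tmul]
  simp [ContinuousMap.mul_apply]

def aCM (g : C(Circle,ℂ)) : C(unitInterval, ℂ) :=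
  ⟨fun t => (g (cExp t) + (starRingEnd ℂ) (g (nC (cExp t)))) / 2, by
    apply Continuous.div_const
    exact (g.continuous.comp continuous_cExp).add
      (Complex.continuous_conj.comp (g.continuous.comp (continuous_nC.comp continuous_cExp)))⟩

def bCM (g : C(Circle,ℂ)) : C(unitInterval, ℂ) :=
  ⟨fun t => (g (cExp t) - (starRingEnd ℂ) (g (nC (cExp t)))) / (2 * Complex.I), by
    apply Continuous.div_const
    exact (g.continuous.comp continuous_cExp).sub
      (Complex.continuous_conj.comp (g.continuous.comp (continuous_nC.comp continuous_cExp)))⟩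

lemma aCM_mem (g : C(Circle,ℂ)) : aCM g ∈ selfConjT := by
  show aCM g 0 = (starRingEnd ℂ) (aCM g 1)
  show (g (cExp 0) + (starRingEnd ℂ) (g (nC (cExp 0)))) / 2
    = (starRingEnd ℂ) ((g (cExp 1) + (starRingEnd ℂ) (g (nC (cExp 1)))) / 2)
  rw [nC_cExp_zero, nC_cExp_one, cExp_one]
  simp only [map_div₀, map_add, Complex.conj_conj, map_ofNat]
  ring

lemma bCM_mem (g : C(Circle,ℂ)) : bCM g ∈ selfConjT := by
  show bCM g 0 = (starRingEnd ℂ) (bCM g 1)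
  show (g (cExp 0) - (starRingEnd ℂ) (g (nC (cExp 0)))) / (2 * Complex.I)
    = (starRingEnd ℂ) ((g (cExp 1) - (starRingEnd ℂ) (g (nC (cExp 1)))) / (2 * Complex.I))
  rw [nC_cExp_zero, nC_cExp_one, cExp_one]
  simp only [map_div₀, map_sub, map_mul, Complex.conj_conj, map_ofNat, Complex.conj_I]
  rw [div_eq_div_iff (by simp [Complex.I_ne_zero]) (by simp [Complex.I_ne_zero])]
  ring

def aT (g : C(Circle,ℂ)) : selfConjT := ⟨aCM g, aCM_mem g⟩
def bT (g : C(Circle,ℂ)) : selfConjT := ⟨bCM g, bCM_mem g⟩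

def F (g : C(Circle,ℂ)) : ℂ ⊗[ℝ] selfConjT := 1 ⊗ₜ[ℝ] aT g + Complex.I ⊗ₜ[ℝ] bT g

lemma aT_add (g h : C(Circle,ℂ)) : aT (g + h) = aT g + aT h := by
  apply Subtype.ext
  apply ContinuousMap.ext
  intro t
  show ((g+h) (cExp t) + (starRingEnd ℂ) ((g+h) (nC (cExp t)))) / 2
    = aCM g t + aCM h t
  show _ = (g (cExp t) + (starRingEnd ℂ) (g (nC (cExp t)))) / 2
    + (h (cExp t) + (starRingEnd ℂ) (h (nC (cExp t)))) / 2
  simp only [ContinuousMap.add_apply, map_add]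
  ring

lemma bT_add (g h : C(Circle,ℂ)) : bT (g + h) = bT g + bT h := by
  apply Subtype.ext
  apply ContinuousMap.ext
  intro t
  show ((g+h) (cExp t) - (starRingEnd ℂ) ((g+h) (nC (cExp t)))) / (2*Complex.I)
    = bCM g t + bCM h t
  show _ = (g (cExp t) - (starRingEnd ℂ) (g (nC (cExp t)))) / (2*Complex.I)
    + (h (cExp t) - (starRingEnd ℂ) (h (nC (cExp t)))) / (2*Complex.I)
  simp only [ContinuousMap.add_apply, map_add]
  ring

lemma F_add (g h : C(Circle,ℂ)) : F (g + h) = F g + F h := by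
  rw [F, F, F, aT_add, bT_add, TensorProduct.tmul_add, TensorProduct.tmul_add]
  abel

lemma F_zero : F 0 = 0 := by
  have h := F_add 0 0
  rw [add_zero] at h
  have := h.symm
  rwa [left_eq_add] at h

lemma aT_E (z : ℂ) (f : selfConjT) : aT (E (z ⊗ₜ[ℝ] f)) = z.re • f := by
  apply Subtype.ext
  apply ContinuousMap.ext
  intro t
  show (E (z ⊗ₜ[ℝ] f) (cExp t) + (starRingEnd ℂ) (E (z ⊗ₜ[ℝ] f) (nC (cExp t)))) / 2 = _
  have hs : ((z.re • f : selfConjT) : C(unitInterval,ℂ)) t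
      = (z.re : ℂ) * (f : C(unitInterval,ℂ)) t := by
    simp [Complex.real_smul]
  rw [hs, E_tmul_apply, E_tmul_apply, glue_nC, glue_cExp]
  simp only [map_mul, Complex.conj_conj]
  have hc := Complex.add_conj z
  push_cast at hc
  linear_combination ((f : C(unitInterval,ℂ)) t / 2) * hc

lemma bT_E (z : ℂ) (f : selfConjT) : bT (E (z ⊗ₜ[ℝ] f)) = z.im • f := by
  apply Subtype.ext
  apply ContinuousMap.ext
  intro t
  show (E (z ⊗ₜ[ℝ] f) (cExp t) - (starRingEnd ℂ) (E (z ⊗ₜ[ℝ] f) (nC (cExp t)))) / (2*Complex.I)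
    = _
  have hs : ((z.im • f : selfConjT) : C(unitInterval,ℂ)) t
      = (z.im : ℂ) * (f : C(unitInterval,ℂ)) t := by
    simp [Complex.real_smul]
  rw [hs, E_tmul_apply, E_tmul_apply, glue_nC, glue_cExp]
  simp only [map_mul, Complex.conj_conj]
  rw [div_eq_iff (by simp [Complex.I_ne_zero] : (2*Complex.I) ≠ 0)]
  have hc := Complex.sub_conj z
  push_cast at hc
  linear_combination ((f : C(unitInterval,ℂ)) t) * hc

lemma F_E_tmul (z : ℂ) (f : selfConjT) : F (E (z ⊗ₜ[ℝ] f)) = z ⊗ₜ[ℝ] f := by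
  rw [F, aT_E, bT_E, TensorProduct.tmul_smul, TensorProduct.tmul_smul,
    TensorProduct.smul_tmul', TensorProduct.smul_tmul', ← TensorProduct.add_tmul]
  congr 1
  rw [Complex.real_smul, Complex.real_smul, mul_one]
  exact Complex.re_add_im z

lemma E_F (g : C(Circle,ℂ)) : E (F g) = g := by
  ext z
  rw [F, map_add, ContinuousMap.add_apply, E_tmul_apply, E_tmul_apply, one_mul]
  by_cases h : 0 ≤ (z:ℂ).im
  · have hz := cExp_projI z h
    rw [glue_apply_of_nonneg _ _ h, glue_apply_of_nonneg _ _ h]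
    show (g (cExp (projI (z:ℂ).re)) + (starRingEnd ℂ) (g (nC (cExp (projI (z:ℂ).re))))) / 2
      + Complex.I * ((g (cExp (projI (z:ℂ).re))
        - (starRingEnd ℂ) (g (nC (cExp (projI (z:ℂ).re))))) / (2*Complex.I)) = g z
    rw [hz]
    field_simp
    ring
  · push_neg at h
    have h' : 0 ≤ ((nC z : Circle):ℂ).im := by simp; linarith
    have hz := cExp_projI (nC z) h'
    rw [coe_nC] at hz
    simp only [Complex.neg_re] at hz
    rw [glue_apply_of_neg _ _ h, glue_apply_of_neg _ _ h]
    show (starRingEnd ℂ) ((g (cExp (projI (-(z:ℂ).re)))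
        + (starRingEnd ℂ) (g (nC (cExp (projI (-(z:ℂ).re)))))) / 2)
      + Complex.I * ((starRingEnd ℂ) ((g (cExp (projI (-(z:ℂ).re)))
        - (starRingEnd ℂ) (g (nC (cExp (projI (-(z:ℂ).re)))))) / (2*Complex.I))) = g z
    rw [hz, nC_nC]
    simp only [map_div₀, map_add, map_sub, map_mul, Complex.conj_conj, map_ofNat, Complex.conj_I]
    field_simp
    ring

lemma F_E (x : ℂ ⊗[ℝ] selfConjT) : F (E x) = x := by
  induction x using TensorProduct.induction_on with
  | zero => rw [map_zero, F_zero]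
  | tmul z f => exact F_E_tmul z f
  | add x y hx hy => rw [map_add, F_add, hx, hy]

/-- The complexification `ℂ ⊗_ℝ T` is *-isomorphic (as a complex C*-algebra) to
`C(S¹, ℂ)`: there is a `ℂ`-algebra isomorphism intertwining the canonical
involution `conj ⊗ star` of the complexification with the star of `C(S¹, ℂ)`. -/
theorem complexification_selfConjT_iso_continuousMap_circle :
    ∃ e : (ℂ ⊗[ℝ] selfConjT) ≃ₐ[ℂ] C(Circle, ℂ),
      ∀ (z : ℂ) (f : selfConjT),
        e ((starRingEnd ℂ z) ⊗ₜ[ℝ] (star f)) = star (e (z ⊗ₜ[ℝ] f)) := by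
  have hbij : Function.Bijective E :=
    ⟨fun x y hxy => by rw [← F_E x, ← F_E y, hxy], fun g => ⟨F g, E_F g⟩⟩
  refine ⟨AlgEquiv.ofBijective E hbij, fun z f => ?_⟩
  show E ((starRingEnd ℂ z) ⊗ₜ[ℝ] (star f)) = star (E (z ⊗ₜ[ℝ] f))
  ext w
  rw [ContinuousMap.star_apply, E_tmul_apply, E_tmul_apply, glue_star]
  simp [Complex.star_def, map_mul]
end
end

section
/- Let B be a unital complex *-algebra containing isometries T₀ and T_{ij} for 1 ≤ i ≤ n, 1 ≤ j ≤ m satisfying the Cuntz relations T₀*T₀ = 1, T_{ij}*T_{ij} = 1, and T₀T₀* + Σ_{i,j} T_{ij}T_{ij}* = 1, with mutually orthogonal ranges. Define elements of M_m(B): S'₀ = diag(T₀, 1, 1, …, 1) and, for 1 ≤ i ≤ n, S'_i the matrix whose first row is (T_{i1}, …, T_{im}) and all other entries zero. Then (S'_i)* S'_i = 1 for all 0 ≤ i ≤ n and Σ_{i=0}^{n} S'_i (S'_i)* = 1 in M_m(B). -/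
open scoped Matrix
open Matrix

set_option synthInstance.maxHeartbeats 1000000
set_option maxHeartbeats 1000000

noncomputable section

/-- Given Cuntz-type isometries `T₀`, `T i j` (for `i : Fin n`, `j : Fin m`) with
mutually orthogonal ranges in a unital *-ring `B`, the matrices
`S'₀ = diag(T₀, 1, …, 1)` and `S'_i = (first row (T i 1, …, T i m), rest zero)`
satisfy `(S'ᵢ)* S'ᵢ = 1` for all `i` and `S'₀ S'₀* + Σᵢ S'ᵢ (S'ᵢ)* = 1` in `M_m(B)`. -/
theorem cuntz_matrix_isometries
    {B : Type*} [Ring B] [StarRing B] {n m : ℕ} [NeZero m]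
    (T₀ : B) (T : Fin n → Fin m → B)
    (h₀ : star T₀ * T₀ = 1)
    (hT : ∀ i j, star (T i j) * T i j = 1)
    (hsum : T₀ * star T₀ + ∑ i : Fin n, ∑ j : Fin m, T i j * star (T i j) = 1)
    (horth₀ : ∀ i j, star T₀ * T i j = 0)
    (horth₀' : ∀ i j, star (T i j) * T₀ = 0)
    (horth : ∀ i j i' j', (i, j) ≠ (i', j') → star (T i j) * T i' j' = 0) :
    letI S₀ : Matrix (Fin m) (Fin m) B :=
      Matrix.diagonal (fun j => if j = 0 then T₀ else 1)
    letI S : Fin n → Matrix (Fin m) (Fin m) B :=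
      fun i => Matrix.of fun a b => if a = 0 then T i b else 0
    S₀ᴴ * S₀ = 1 ∧ (∀ i, (S i)ᴴ * S i = 1)
      ∧ S₀ * S₀ᴴ + ∑ i : Fin n, S i * (S i)ᴴ = 1 := by
  refine ⟨?_, ?_, ?_⟩
  · ext a b
    simp only [Matrix.conjTranspose_apply, Matrix.mul_apply, Matrix.diagonal_apply,
      Matrix.one_apply]
    rcases eq_or_ne a b with rfl | hab
    · by_cases h : a = 0 <;> simp [h, h₀]
    · simp [hab, Ne.symm hab]
  · intro i
    ext a b
    simp only [Matrix.conjTranspose_apply, Matrix.mul_apply, Matrix.of_apply,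
      Matrix.one_apply]
    rw [Finset.sum_eq_single (0 : Fin m)]
    · rcases eq_or_ne a b with rfl | hab
      · simp [hT]
      · simp [hab, horth i a i b (by simp [hab])]
    · intro c _ hc; simp [hc]
    · simp
  · ext a b
    simp only [Matrix.add_apply, Matrix.sum_apply, Matrix.conjTranspose_apply,
      Matrix.mul_apply, Matrix.of_apply, Matrix.diagonal_apply, Matrix.one_apply]
    rcases eq_or_ne a b with rfl | hab
    · by_cases h : a = 0
      · subst h
        simpa using hsum
      · simp [h, Ne.symm h]
    · by_cases ha : a = 0
      · have hb : b ≠ 0 := fun hb => hab (ha.trans hb.symm)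
        simp [hab, Ne.symm hab, ha, hb, Ne.symm hb]
      · simp [hab, Ne.symm hab, ha]
end
end

section
/- Let A be a unital Banach *-algebra over ℝ satisfying the C*-identity ‖a*a‖ = ‖a‖² for all a. If additionally 1 + a*a is invertible for every a ∈ A, then every element of the form 1 + Σ_{k=1}^{n} a_k* a_k is invertible in A. -/
open scoped NNReal


set_option synthInstance.maxHeartbeats 1000000
set_option maxHeartbeats 1000000

section Aux

variable {A : Type*} [NormedRing A] [StarRing A] [NormedAlgebra ℝ A] [CompleteSpace A]

/-- The C*-identity implies that `star` is norm-preserving. -/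
lemma cstar_norm_star_eq (hC : ∀ a : A, ‖star a * a‖ = ‖a‖ ^ 2) (a : A) :
    ‖star a‖ = ‖a‖ := by
  have h1 : ‖a‖ ^ 2 ≤ ‖star a‖ * ‖a‖ := by
    rw [← hC a]; exact norm_mul_le _ _
  have h2 : ‖star a‖ ^ 2 ≤ ‖a‖ * ‖star a‖ := by
    have h := hC (star a)
    rw [star_star] at h
    rw [← h]; exact norm_mul_le _ _
  nlinarith [norm_nonneg a, norm_nonneg (star a)]

lemma cstar_star_isometry (hC : ∀ a : A, ‖star a * a‖ = ‖a‖ ^ 2) :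
    Isometry (star : A → A) :=
  AddMonoidHomClass.isometry_of_norm (starAddEquiv : A ≃+ A)
    (fun x => cstar_norm_star_eq hC x)

/-- `star` is `ℝ`-linear (derived from continuity). -/
lemma cstar_star_smul (hC : ∀ a : A, ‖star a * a‖ = ‖a‖ ^ 2) (r : ℝ) (x : A) :
    star (r • x) = r • star x :=
  map_real_smul (starAddEquiv : A ≃+ A) (cstar_star_isometry hC).continuous r x

/-- Square roots near one, via the Banach fixed point theorem. -/
lemma cstar_exists_sqrt (hC : ∀ a : A, ‖star a * a‖ = ‖a‖ ^ 2)
    {x : A} (hx : IsSelfAdjoint x) (hxn : ‖x‖ ≤ 2/3) :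
    ∃ y : A, IsSelfAdjoint y ∧ ‖y‖ ≤ 4/5 ∧ (1 - y) * (1 - y) = 1 - x := by
  set D : Set A := {y | ‖y‖ ≤ 4/5} ∩ {y | star y = y} with hD
  have hDclosed : IsClosed D :=
    IsClosed.inter (isClosed_le continuous_norm continuous_const)
      (isClosed_eq (cstar_star_isometry hC).continuous continuous_id)
  haveI : CompleteSpace D := hDclosed.completeSpace_coe
  haveI : Nonempty D := ⟨⟨0, ⟨by simp only [Set.mem_setOf_eq, norm_zero]; norm_num, by
    simp only [Set.mem_setOf_eq, star_zero]⟩⟩⟩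
  have hmem : ∀ y : D, ‖(y : A)‖ ≤ 4/5 ∧ star (y : A) = (y : A) := fun y => y.2
  have hFmem : ∀ y : D, ((2⁻¹ : ℝ) • (x + (y : A) * (y : A))) ∈ D := by
    intro y
    obtain ⟨hyn, hys⟩ := hmem y
    constructor
    · show ‖(2⁻¹ : ℝ) • (x + (y : A) * (y : A))‖ ≤ 4/5
      rw [norm_smul]
      have h1 : ‖x + (y : A) * (y : A)‖ ≤ ‖x‖ + ‖(y:A)‖ * ‖(y:A)‖ :=
        le_trans (norm_add_le _ _) (by gcongr; exact norm_mul_le _ _)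
      have h2 : ‖(y:A)‖ * ‖(y:A)‖ ≤ (4/5) * (4/5) := by
        have := norm_nonneg (y : A); nlinarith
      have h3 : ‖x + (y : A) * (y : A)‖ ≤ 2/3 + 16/25 := by nlinarith
      rw [Real.norm_eq_abs, abs_of_pos (by norm_num : (0:ℝ) < 2⁻¹)]
      nlinarith
    · show star ((2⁻¹ : ℝ) • (x + (y : A) * (y : A))) = _
      rw [cstar_star_smul hC, star_add, star_mul, hys, hx.star_eq]
  set F : D → D := fun y => ⟨(2⁻¹ : ℝ) • (x + (y : A) * (y : A)), hFmem y⟩ with hF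
  have hcontr : ContractingWith (4/5 : ℝ≥0) F := by
    constructor
    · rw [← NNReal.coe_lt_coe]; norm_num
    · apply LipschitzWith.of_dist_le_mul
      intro y z
      simp only [Subtype.dist_eq, dist_eq_norm]
      show ‖(2⁻¹ : ℝ) • (x + (y : A) * (y : A)) - (2⁻¹ : ℝ) • (x + (z : A) * (z : A))‖ ≤ _
      rw [← smul_sub, norm_smul]
      have hyz : x + (y : A) * (y : A) - (x + (z : A) * (z : A))
          = (y : A) * ((y : A) - (z : A)) + ((y : A) - (z : A)) * (z : A) := by
        noncomm_ring
      rw [hyz]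
      have h1 : ‖(y : A) * ((y : A) - (z : A)) + ((y : A) - (z : A)) * (z : A)‖
          ≤ ‖(y:A)‖ * ‖(y:A) - (z:A)‖ + ‖(y:A) - (z:A)‖ * ‖(z:A)‖ :=
        le_trans (norm_add_le _ _)
          (add_le_add (norm_mul_le _ _) (norm_mul_le _ _))
      obtain ⟨hyn, -⟩ := hmem y
      obtain ⟨hzn, -⟩ := hmem z
      have hnn : (0:ℝ) ≤ ‖(y:A) - (z:A)‖ := norm_nonneg _
      rw [Real.norm_eq_abs, abs_of_pos (by norm_num : (0:ℝ) < 2⁻¹)]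
      have hc : ((4/5 : ℝ≥0) : ℝ) = 4/5 := by norm_num
      rw [hc]
      nlinarith
  set yD := ContractingWith.fixedPoint F hcontr with hyD
  have hfix : F yD = yD := hcontr.fixedPoint_isFixedPt
  set y : A := (yD : A) with hy
  have hfp : (2⁻¹ : ℝ) • (x + y * y) = y := congrArg Subtype.val hfix
  obtain ⟨hyn, hysa⟩ := hmem yD
  refine ⟨y, hysa, hyn, ?_⟩
  have hfp2 : x + y * y = y + y := by
    have h := congrArg (fun z : A => (2:ℝ) • z) hfp
    simp only [smul_smul] at h
    norm_num at h
    rw [h, two_smul]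
  have expand : (1 - y) * (1 - y) = 1 - (y + y) + y * y := by noncomm_ring
  rw [expand, ← hfp2]
  abel

/-- If `‖c‖² ≤ 1/2` then `1 + c* c` is of the form `m* m` with `m` invertible. -/
lemma cstar_step (hC : ∀ a : A, ‖star a * a‖ = ‖a‖ ^ 2) (h1 : ‖(1 : A)‖ = 1)
    {c : A} (hc : ‖c‖ ^ 2 ≤ 1/2) :
    ∃ m : A, IsUnit m ∧ star m * m = 1 + star c * c := by
  set T : ℝ := ‖c‖ ^ 2 with hT
  have hT0 : 0 ≤ T := sq_nonneg _
  have hT1 : (0:ℝ) < 1 + T := by linarith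
  set x : A := (1 + T)⁻¹ • (T • (1 : A) - star c * c) with hx
  have hxsa : IsSelfAdjoint x := by
    show star x = x
    rw [hx, cstar_star_smul hC, star_sub, cstar_star_smul hC, star_one, star_mul, star_star]
  have hxn : ‖x‖ ≤ 2/3 := by
    have hz : ‖T • (1 : A) - star c * c‖ ≤ T + T := by
      refine le_trans (norm_sub_le _ _) ?_
      rw [norm_smul, Real.norm_eq_abs, abs_of_nonneg hT0, h1, hC c]
      simp [hT]
    rw [hx, norm_smul, Real.norm_eq_abs, abs_of_nonneg (le_of_lt (inv_pos.2 hT1))]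
    have h2 : (1 + T)⁻¹ * ‖T • (1 : A) - star c * c‖ ≤ (1 + T)⁻¹ * (T + T) := by
      gcongr
    refine le_trans h2 ?_
    rw [inv_mul_le_iff₀ hT1]
    nlinarith
  obtain ⟨y, hysa, hyn, hysq⟩ := cstar_exists_sqrt hC hxsa hxn
  have hyu : IsUnit (1 - y) := by
    have hy1 : ‖y‖ < 1 := lt_of_le_of_lt hyn (by norm_num)
    exact (Units.oneSub y hy1).isUnit
  set s : ℝ := Real.sqrt (1 + T) with hs
  have hss : s * s = 1 + T := Real.mul_self_sqrt (le_of_lt hT1)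
  have hsne : s ≠ 0 := by
    intro h
    rw [h] at hss
    nlinarith
  refine ⟨s • (1 - y), ?_, ?_⟩
  · rw [Algebra.smul_def]
    exact ((isUnit_iff_ne_zero.2 hsne).map (algebraMap ℝ A)).mul hyu
  · have hstar : star (s • (1 - y)) = s • (1 - y) := by
      rw [cstar_star_smul hC, star_sub, star_one, hysa.star_eq]
    rw [hstar, smul_mul_assoc, mul_smul_comm, smul_smul, hss, hysq]
    rw [hx, smul_sub, smul_smul, mul_inv_cancel₀ (ne_of_gt hT1), one_smul, add_smul, one_smul]
    abel

/-- Conjugation step. -/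
lemma cstar_conj {m p bb : A} (M : Aˣ) (hm : (M : A) = m)
    (hp : star p * p = 1 + star (bb * (↑M⁻¹ : A)) * (bb * (↑M⁻¹ : A))) :
    star (p * m) * (p * m) = star m * m + star bb * bb := by
  set c : A := bb * (↑M⁻¹ : A) with hc
  have hcm : c * m = bb := by
    rw [hc, ← hm, mul_assoc, Units.inv_mul, mul_one]
  have expand : star (p * m) * (p * m) = star m * (star p * p) * m := by
    rw [star_mul]
    simp only [mul_assoc]
  rw [expand, hp, mul_add, mul_one, add_mul]
  congr 1
  calc star m * (star c * c) * m = star m * star c * (c * m) := by simp only [mul_assoc]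
    _ = star (c * m) * (c * m) := by rw [star_mul c m]
    _ = star bb * bb := by rw [hcm]

/-- Key lemma: for every `b`, `1 + b* b = m* m` for some invertible `m`. -/
lemma cstar_all (hC : ∀ a : A, ‖star a * a‖ = ‖a‖ ^ 2) (h1 : ‖(1 : A)‖ = 1)
    (hinv : ∀ a : A, IsUnit (1 + star a * a)) (b : A) :
    ∃ m : A, IsUnit m ∧ star m * m = 1 + star b * b := by
  set w : A := star b * b with hw
  have hsmul : ∀ s : ℝ, 0 ≤ s → star (Real.sqrt s • b) * (Real.sqrt s • b) = s • w := by
    intro s hs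
    rw [cstar_star_smul hC, smul_mul_assoc, mul_smul_comm, smul_smul,
      Real.mul_self_sqrt hs]
  have hunit : ∀ s ∈ Set.Icc (0:ℝ) 1, IsUnit (1 + s • w) := by
    intro s hs
    have h := hinv (Real.sqrt s • b)
    rwa [hsmul s hs.1] at h
  obtain ⟨C, hCb⟩ : ∃ C, ∀ s ∈ Set.Icc (0:ℝ) 1, ‖Ring.inverse (1 + s • w)‖ ≤ C := by
    apply IsCompact.exists_bound_of_continuousOn isCompact_Icc
    intro s hs
    have hcont : ContinuousAt (fun s : ℝ => Ring.inverse (1 + s • w)) s := by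
      have h2 : ContinuousAt Ring.inverse (1 + s • w) :=
        (hunit s hs).unit_spec ▸ NormedRing.inverse_continuousAt (hunit s hs).unit
      have hin : ContinuousAt (fun s : ℝ => 1 + s • w) s := by fun_prop
      exact ContinuousAt.comp (g := Ring.inverse) (f := fun s : ℝ => 1 + s • w) h2 hin
    exact hcont.continuousWithinAt
  have hC0 : 0 ≤ C := le_trans (norm_nonneg _) (hCb 0 ⟨le_refl _, zero_le_one⟩)
  set N : ℕ := ⌈2 * (‖b‖ ^ 2 * C)⌉₊ + 1 with hN
  have hNpos : (0:ℝ) < N := by positivity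
  have hNbound : ‖b‖ ^ 2 * C / N ≤ 1/2 := by
    have h2 : 2 * (‖b‖ ^ 2 * C) ≤ N := by
      have := Nat.le_ceil (2 * (‖b‖ ^ 2 * C))
      push_cast [hN]
      push_cast at this
      linarith
    rw [div_le_iff₀ hNpos]
    linarith
  have key : ∀ k : ℕ, k ≤ N → ∃ m : A, IsUnit m ∧ star m * m = 1 + ((k : ℝ)/N) • w := by
    intro k
    induction k with
    | zero => intro _; exact ⟨1, isUnit_one, by simp⟩
    | succ k ih =>
      intro hk
      obtain ⟨m, hmU, hmE⟩ := ih (Nat.le_of_succ_le hk)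
      set M : Aˣ := hmU.unit with hM
      have hMm : (M : A) = m := hmU.unit_spec
      set mi : A := (↑M⁻¹ : A) with hmi
      -- the inverse of 1 + (k/N) • w is mi * star mi
      have hval : (1 + ((k : ℝ)/N) • w) * (mi * star mi) = 1 := by
        rw [← hmE, hmi, ← hMm, mul_assoc, ← mul_assoc (M : A), Units.mul_inv, one_mul,
          ← star_mul, Units.inv_mul, star_one]
      have hinvval : (mi * star mi) * (1 + ((k : ℝ)/N) • w) = 1 := by
        rw [← hmE, hmi, ← hMm, mul_assoc, ← mul_assoc (star (↑M⁻¹ : A)), ← star_mul,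
          Units.mul_inv, star_one, one_mul, Units.inv_mul]
      set U : Aˣ := ⟨1 + ((k : ℝ)/N) • w, mi * star mi, hval, hinvval⟩ with hU
      have hRinv : Ring.inverse (1 + ((k : ℝ)/N) • w) = mi * star mi := by
        have := Ring.inverse_unit U
        simpa [hU] using this
      have hmem : (k : ℝ)/N ∈ Set.Icc (0:ℝ) 1 := by
        constructor
        · positivity
        · rw [div_le_one hNpos]
          exact_mod_cast Nat.le_of_succ_le hk
      have hmibound : ‖mi * star mi‖ ≤ C := by
        rw [← hRinv]; exact hCb _ hmem
      have hmisq : ‖mi‖ ^ 2 = ‖mi * star mi‖ := by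
        have h := hC (star mi)
        rw [star_star, cstar_norm_star_eq hC] at h
        exact h.symm
      -- the new small piece
      set b' : A := Real.sqrt (1/(N:ℝ)) • b with hb'
      have hb'w : star b' * b' = (1/(N:ℝ)) • w := hsmul _ (by positivity)
      set c : A := b' * mi with hcdef
      have hcnorm : ‖c‖ ^ 2 ≤ 1/2 := by
        have hcle : ‖c‖ ≤ ‖b'‖ * ‖mi‖ := norm_mul_le _ _
        have hb'n : ‖b'‖ ^ 2 = (1/(N:ℝ)) * ‖b‖ ^ 2 := by
          rw [hb', norm_smul, Real.norm_eq_abs, abs_of_nonneg (Real.sqrt_nonneg _), mul_pow,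
            Real.sq_sqrt (by positivity)]
        have hmiC : ‖mi‖ ^ 2 ≤ C := by rw [hmisq]; exact hmibound
        have h2 : ‖c‖ ^ 2 ≤ ‖b'‖ ^ 2 * ‖mi‖ ^ 2 := by
          have := norm_nonneg c
          have := norm_nonneg b'
          have := norm_nonneg mi
          nlinarith
        have h3 : ‖b'‖ ^ 2 * ‖mi‖ ^ 2 ≤ (1/(N:ℝ)) * ‖b‖ ^ 2 * C := by
          rw [hb'n]
          have : (0:ℝ) ≤ (1/(N:ℝ)) * ‖b‖ ^ 2 := by positivity
          nlinarith [sq_nonneg ‖mi‖]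
        have h4 : (1/(N:ℝ)) * ‖b‖ ^ 2 * C ≤ 1/2 := by
          calc (1/(N:ℝ)) * ‖b‖ ^ 2 * C = ‖b‖ ^ 2 * C / N := by ring
            _ ≤ 1/2 := hNbound
        linarith
      obtain ⟨p, hpU, hpE⟩ := cstar_step hC h1 hcnorm
      refine ⟨p * m, hpU.mul hmU, ?_⟩
      have hconj := cstar_conj M hMm (by rw [hpE, hcdef, hmi])
      rw [hconj, hmE, hb'w, add_assoc, ← add_smul]
      congr 2
      push_cast
      field_simp
  obtain ⟨m, hmU, hmE⟩ := key N (le_refl N)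
  refine ⟨m, hmU, ?_⟩
  rw [hmE, div_self (ne_of_gt hNpos), one_smul]

end Aux

/-- In a unital real Banach *-algebra satisfying the C*-identity, if `1 + a* a` is
invertible for every `a`, then `1 + Σ_{k} aₖ* aₖ` is invertible for every finite
family `(aₖ)`. -/
theorem one_add_sum_star_mul_self_isUnit
    {A : Type*} [NormedRing A] [StarRing A] [NormedAlgebra ℝ A] [CompleteSpace A]
    (hC : ∀ a : A, ‖star a * a‖ = ‖a‖ ^ 2)
    (hinv : ∀ a : A, IsUnit (1 + star a * a)) :
    ∀ (n : ℕ) (a : Fin n → A), IsUnit (1 + ∑ k : Fin n, star (a k) * a k) := by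
  have h11 : ‖(1:A)‖ = ‖(1:A)‖ ^ 2 := by
    have h := hC (1 : A)
    simpa using h
  rcases mul_eq_zero.1 (show ‖(1:A)‖ * (‖(1:A)‖ - 1) = 0 by nlinarith [h11]) with h0 | h0
  · -- degenerate case : the algebra is trivial
    have h10 : (1 : A) = 0 := norm_eq_zero.mp h0
    haveI : Subsingleton A := subsingleton_of_zero_eq_one h10.symm
    intro n a
    exact isUnit_of_subsingleton _
  · have h1 : ‖(1:A)‖ = 1 := by linarith [sub_eq_zero.mp h0]
    have key : ∀ (n : ℕ) (a : Fin n → A),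
        ∃ m : A, IsUnit m ∧ star m * m = 1 + ∑ k : Fin n, star (a k) * a k := by
      intro n
      induction n with
      | zero => intro a; exact ⟨1, isUnit_one, by simp⟩
      | succ n ih =>
        intro a
        obtain ⟨m, hmU, hmE⟩ := ih (fun k => a k.castSucc)
        set M : Aˣ := hmU.unit with hM
        have hMm : (M : A) = m := hmU.unit_spec
        set bb : A := a (Fin.last n) with hbb
        obtain ⟨p, hpU, hpE⟩ := cstar_all hC h1 hinv (bb * (↑M⁻¹ : A))
        refine ⟨p * m, hpU.mul hmU, ?_⟩
        have hconj := cstar_conj M hMm hpE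
        rw [hconj, hmE, Fin.sum_univ_castSucc, add_assoc]
    intro n a
    obtain ⟨m, hmU, hmE⟩ := key n a
    rw [← hmE]
    exact hmU.star.mul hmU
end
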